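/- For every positive integer n, the sum over k from 0 to n-1 of (11k^3+7k^2-1)·(-1)^k·β_k is divisible by n^2, where β_k = Σ_{j=0}^{k} C(k,j)^2·C(k+j,j). -/

import Mathlib

def apheryBeta (k : ℕ) : ℕ := ∑ j ∈ Finset.range (k + 1), (Nat.choose k j) ^ 2 * Nat.choose (k + j) j

/-!
The Apéry numbers satisfy the three-term recurrence
`(m + 2)² β (m + 2) = (11 (m + 1)² + 11 (m + 1) + 3) β (m + 1) + (m + 1)² β m`,
proved by creative telescoping: applied to the summand `C(k, j)² C(k + j, j)`, the recurrence
operator is the difference in `j` of an explicit rational multiple of the summand. The recurrence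
makes the weighted partial sums telescope to
`∑_{k ≤ n} (11k³ + 7k² - 1) (-1)^k β k = (-1)^n (n + 1)² (n β (n + 1) - (n + 1) β n)`,
which is visibly divisible by `(n + 1)²`.
-/

open Finset

def apheryTerm (k j : ℕ) : ℚ := (k.choose j : ℚ) ^ 2 * (k + j).choose j

lemma apheryTerm_succ_left (k j : ℕ) :
    ((k : ℚ) + 1 - j) ^ 2 * apheryTerm (k + 1) j = (k + 1) * (k + j + 1) * apheryTerm k j := by
  rcases le_or_gt j (k + 1) with hj | hj
  · have h₁ := Nat.choose_mul_succ_eq k j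
    have h₂ := Nat.choose_mul_succ_eq (k + j) j
    rw [show k + j + 1 - j = k + 1 by omega, show k + j + 1 = k + 1 + j by omega] at h₂
    qify [hj] at h₁ h₂
    refine mul_right_cancel₀ (by positivity : (k : ℚ) + 1 ≠ 0) ?_
    calc _ = ((k + 1).choose j * ((k : ℚ) + 1 - j)) ^ 2
            * ((k + 1 + j).choose j * ((k : ℚ) + 1)) := by
          unfold apheryTerm; ring
      _ = (k.choose j * ((k : ℚ) + 1)) ^ 2 * ((k + j).choose j * ((k : ℚ) + j + 1)) := by
          rw [← h₁, ← h₂]; ring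
      _ = _ := by unfold apheryTerm; ring
  · simp [apheryTerm, Nat.choose_eq_zero_of_lt hj, Nat.choose_eq_zero_of_lt (by omega : k < j)]

lemma apheryTerm_succ_right (k j : ℕ) :
    ((j : ℚ) + 1) ^ 3 * apheryTerm k (j + 1) = (k - j) ^ 2 * (k + j + 1) * apheryTerm k j := by
  rcases le_or_gt j k with hj | hj
  · have h₁ := Nat.choose_succ_right_eq k j
    have h₂ := Nat.add_one_mul_choose_eq (k + j) j
    qify [hj] at h₁ h₂
    calc _ = (k.choose (j + 1) * ((j : ℚ) + 1)) ^ 2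
            * ((k + j + 1).choose (j + 1) * ((j : ℚ) + 1)) := by
          unfold apheryTerm; rw [← add_assoc]; ring
      _ = (k.choose j * ((k : ℚ) - j)) ^ 2 * (((k : ℚ) + j + 1) * (k + j).choose j) := by
          rw [h₁, ← h₂]
      _ = _ := by unfold apheryTerm; ring
  · simp [apheryTerm, Nat.choose_eq_zero_of_lt hj, Nat.choose_eq_zero_of_lt (by omega : k < j + 1)]

/-- The certificate produced by Zeilberger's algorithm for the Apéry recurrence. -/
def apheryCertificate (k j : ℕ) : ℚ :=
  (((j : ℚ) + 1) ^ 2 + (6 * k + 1) * (j + 1) - 11 * k ^ 2 - 15 * k - 4) * apheryTerm k j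

lemma apheryTerm_recurrence_eq_certificate_sub {m i : ℕ} (hi : i ≤ m + 1) :
    ((m : ℚ) + 2) ^ 2 * apheryTerm (m + 2) (i + 1)
      - (11 * ((m : ℚ) + 1) ^ 2 + 11 * (m + 1) + 3) * apheryTerm (m + 1) (i + 1)
      - ((m : ℚ) + 1) ^ 2 * apheryTerm m (i + 1)
    = apheryCertificate (m + 1) (i + 1) - apheryCertificate (m + 1) i := by
  -- Every term is a rational multiple of `apheryTerm (m + 1) i`; `i ≤ m + 1` keeps the
  -- denominators nonzero.
  have hiQ : (i : ℚ) ≤ m + 1 := by exact_mod_cast hi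
  have hden : (m : ℚ) + 2 - i ≠ 0 := by linarith
  have t₁ : apheryTerm (m + 1) (i + 1)
      = (m + 1 - i) ^ 2 * (m + i + 2) / (i + 1) ^ 3 * apheryTerm (m + 1) i := by
    have := apheryTerm_succ_right (m + 1) i
    push_cast at this
    field_simp
    linear_combination this
  have t₂ : apheryTerm m i
      = (m + 1 - i) ^ 2 / ((m + 1) * (m + i + 1)) * apheryTerm (m + 1) i := by
    have := apheryTerm_succ_left m i
    field_simp
    linear_combination -this
  have t₃ : apheryTerm m (i + 1) = (m - i) ^ 2 * (m + i + 1) / (i + 1) ^ 3 * apheryTerm m i := by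
    have := apheryTerm_succ_right m i
    field_simp
    linear_combination this
  have t₄ : apheryTerm (m + 2) i
      = (m + 2) * (m + i + 2) / (m + 2 - i) ^ 2 * apheryTerm (m + 1) i := by
    have := apheryTerm_succ_left (m + 1) i
    push_cast at this
    field_simp
    linear_combination this
  have t₅ : apheryTerm (m + 2) (i + 1)
      = (m + 2 - i) ^ 2 * (m + i + 3) / (i + 1) ^ 3 * apheryTerm (m + 2) i := by
    have := apheryTerm_succ_right (m + 2) i
    push_cast at this
    field_simp
    linear_combination this
  unfold apheryCertificate
  rw [t₅, t₄, t₃, t₂, t₁]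
  push_cast
  field_simp
  ring

lemma cast_apheryBeta_eq_sum {k N : ℕ} (h : k < N) :
    (apheryBeta k : ℚ) = ∑ j ∈ range N, apheryTerm k j := by
  rw [apheryBeta]
  push_cast
  refine sum_subset (range_subset_range.2 h) fun j _ hj => ?_
  simp [Nat.choose_eq_zero_of_lt (by simpa using hj : k < j)]

lemma apheryBeta_recurrence (m : ℕ) :
    (m + 2) ^ 2 * apheryBeta (m + 2)
      = (11 * (m + 1) ^ 2 + 11 * (m + 1) + 3) * apheryBeta (m + 1)
        + (m + 1) ^ 2 * apheryBeta m := by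
  have telescope : ∑ j ∈ range (m + 3), (((m : ℚ) + 2) ^ 2 * apheryTerm (m + 2) j
      - (11 * ((m : ℚ) + 1) ^ 2 + 11 * (m + 1) + 3) * apheryTerm (m + 1) j
      - ((m : ℚ) + 1) ^ 2 * apheryTerm m j) = 0 := by
    have hvanish : apheryTerm (m + 1) (m + 2) = 0 := by simp [apheryTerm]
    rw [sum_range_succ', sum_congr rfl fun i hi =>
      apheryTerm_recurrence_eq_certificate_sub (Nat.lt_succ_iff.1 (mem_range.1 hi)),
      sum_range_sub (apheryCertificate (m + 1)), apheryCertificate, apheryCertificate, hvanish]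
    simp only [apheryTerm, Nat.choose_zero_right, add_zero]
    push_cast
    ring
  rw [sum_sub_distrib, sum_sub_distrib, ← mul_sum, ← mul_sum, ← mul_sum,
    ← cast_apheryBeta_eq_sum (by omega), ← cast_apheryBeta_eq_sum (by omega),
    ← cast_apheryBeta_eq_sum (by omega)] at telescope
  have : ((m : ℚ) + 2) ^ 2 * apheryBeta (m + 2)
      = (11 * ((m : ℚ) + 1) ^ 2 + 11 * (m + 1) + 3) * apheryBeta (m + 1)
        + ((m : ℚ) + 1) ^ 2 * apheryBeta m := by
    linear_combination telescope
  exact_mod_cast this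

lemma apheryBeta_weighted_sum_eq (n : ℕ) :
    ∑ k ∈ range (n + 1), (11 * (k : ℤ) ^ 3 + 7 * k ^ 2 - 1) * (-1) ^ k * apheryBeta k
      = ((n : ℤ) + 1) ^ 2 * ((-1) ^ n * (n * apheryBeta (n + 1) - (n + 1) * apheryBeta n)) := by
  induction n with
  | zero => simp [apheryBeta]
  | succ n ih =>
    have := apheryBeta_recurrence n
    zify at this
    rw [sum_range_succ, ih]
    push_cast
    linear_combination (-1) ^ n * ((n : ℤ) + 1) * this

theorem stmt2_general (n : ℕ) :
    ((n : ℤ) ^ 2) ∣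
      ∑ k ∈ Finset.range n,
        (11 * (k : ℤ) ^ 3 + 7 * k ^ 2 - 1) * (-1) ^ k * (apheryBeta k : ℤ) := by
  cases n with
  | zero => simp
  | succ n =>
    rw [apheryBeta_weighted_sum_eq]
    push_cast
    exact dvd_mul_right _ _

theorem stmt2 (n : ℕ) (hn : 0 < n) :
    ((n : ℤ) ^ 2) ∣
      ∑ k ∈ Finset.range n,
        (11 * (k : ℤ) ^ 3 + 7 * k ^ 2 - 1) * (-1) ^ k * (apheryBeta k : ℤ) :=
  stmt2_general n
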